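/- arXiv:2601.03754 — 7 statements merged into one kernel-verified Lean document; each statement's English description precedes it below -/
import Mathlib

section
/- Fix a real number p ≥ 2. For every real N ≥ p, with N₁*(N) = (19N − 19p + 19)/(7p + 12), the denominator (7/3)·N₁*(N) − 1 + (10/3)p − 16/3 is strictly positive, and the theoretical speedup S(N) = ((7/3)N − 2) / ((7/3)·N₁*(N) − 1 + (10/3)p − 16/3) satisfies S(N) < 7p/19 + 12/19. In other words, 7p/19 + 12/19 is a strict upper bound on the achievable speedup of the partition-permutation method with p threads for every problem size. -/
/-- For every problem size `N ≥ p`, the makespan denominator of the partition-permutation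
parallel factorization with `p ≥ 2` threads is strictly positive, and the theoretical
speedup `S(N) = ((7/3)N − 2) / ((7/3)·N₁*(N) − 1 + (10/3)p − 16/3)` with
`N₁*(N) = (19N − 19p + 19)/(7p + 12)` is strictly below the asymptotic bound
`7p/19 + 12/19`. -/
theorem partition_speedup_strict_upper_bound (p : ℝ) (hp : 2 ≤ p) (N : ℝ) (hN : p ≤ N) :
    0 < (7 / 3) * ((19 * N - 19 * p + 19) / (7 * p + 12)) - 1 + (10 / 3) * p - 16 / 3 ∧
    ((7 / 3) * N - 2) /
        ((7 / 3) * ((19 * N - 19 * p + 19) / (7 * p + 12)) - 1 + (10 / 3) * p - 16 / 3)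
      < 7 * p / 19 + 12 / 19 := by
  have hc : (0:ℝ) < 7 * p + 12 := by linarith
  have hx : (19 * N - 19 * p + 19) / (7 * p + 12) * (7 * p + 12)
      = 19 * N - 19 * p + 19 := div_mul_cancel₀ _ (ne_of_gt hc)
  set x := (19 * N - 19 * p + 19) / (7 * p + 12) with hxdef
  have hD : 0 < (7 / 3) * x - 1 + (10 / 3) * p - 16 / 3 := by nlinarith [sq_nonneg p]
  refine ⟨hD, ?_⟩
  rw [div_lt_iff₀ hD]
  nlinarith [sq_nonneg p, sq_nonneg (p - 2)]
end

section
/- Let N ≥ 3 and p ≥ ⌈N/2⌉ be natural numbers. Then, as rational (or real) numbers, the single-stage parallel cost ⌈⌈N/2⌉/p⌉·(19/3) + ⌊N/2⌋·(7/3) − 2 is strictly less than the sequential cost (7/3)·N − 2 if and only if N ≥ 5. That is, with unlimited parallel threads, the single-stage permutation yields an actual speedup over sequential factorization exactly when N ≥ 5. -/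
/-- For `N ≥ 3` and `p ≥ ⌈N/2⌉` parallel threads, the per-`n³` cost
`⌈⌈N/2⌉/p⌉·(19/3) + ⌊N/2⌋·(7/3) − 2` of the single-stage odd–even permutation
factorization is strictly smaller than the sequential cost `(7/3)·N − 2` (as rational
numbers) if and only if `N ≥ 5`:  with unlimited parallel threads, the single-stage
permutation yields an actual speedup exactly when `N ≥ 5`. -/
theorem single_stage_speedup_iff (N p : ℕ) (hN : 3 ≤ N) (hp : N ⌈/⌉ 2 ≤ p) :
    ((((N ⌈/⌉ 2) ⌈/⌉ p : ℕ) : ℚ) * (19 / 3) + ((N / 2 : ℕ) : ℚ) * (7 / 3) - 2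
        < (7 / 3) * (N : ℚ) - 2) ↔ 5 ≤ N := by
  have hc : N ⌈/⌉ 2 = (N + 1) / 2 := Nat.ceilDiv_eq_add_pred_div N 2
  have h1 : (N ⌈/⌉ 2) ⌈/⌉ p = 1 := by
    simp only [Nat.ceilDiv_eq_add_pred_div] at hp ⊢
    refine Nat.div_eq_of_lt_le ?_ ?_ <;> omega
  rw [h1]
  have key : (19 : ℚ) + (N / 2 : ℕ) * 7 < 7 * N ↔ 5 ≤ N := by
    rw [show ((7 : ℚ) * N) = ((7 * N : ℕ) : ℚ) by push_cast; ring,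
        show ((19 : ℚ) + (N / 2 : ℕ) * 7) = ((19 + (N/2) * 7 : ℕ) : ℚ) by push_cast; ring]
    rw [Nat.cast_lt]
    omega
  constructor
  · intro h
    rw [← key]
    nlinarith [h]
  · intro h
    have := key.mpr h
    push_cast
    nlinarith [this]
end

section
/- Let N ≥ 2 and p be natural numbers with p ≥ ⌈N/2⌉. Then ⌈N/(2p)⌉·(16/3) + (∑_{i=1}^{⌊log₂ N⌋ − 1} ⌈⌈N/2^{i+1}⌉/p⌉·(22/3)) + 4/3 = (22·⌊log₂ N⌋ − 2)/3, where ⌊log₂ N⌋ = Nat.log 2 N and ⌈·⌉ denotes integer ceiling. Consequently, with p ≥ ⌈N/2⌉ parallel threads the multi-stage (nested dissection) factorization of a block tridiagonal matrix with N blocks of size n costs ((22·⌊log₂ N⌋ − 2)/3)·n³ flops, which is O(log₂(N)·n³). -/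
lemma ceilDiv_eq_one_of (a b : ℕ) (ha : 0 < a) (hab : a ≤ b) : a ⌈/⌉ b = 1 := by
  have hb : 0 < b := lt_of_lt_of_le ha hab
  refine le_antisymm ((ceilDiv_le_iff_le_mul hb).2 (by simpa using hab)) ?_
  by_contra h
  have : a ⌈/⌉ b = 0 := by omega
  have := le_smul_ceilDiv (b := a) hb
  simp [this, ‹a ⌈/⌉ b = 0›] at *
  omega

/-- For `N ≥ 2` and `p ≥ ⌈N/2⌉` parallel threads, the per-`n³` flop count of the
multi-stage (nested dissection) factorization collapses to a logarithmic expression: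
`⌈N/(2p)⌉·(16/3) + ∑_{i=1}^{⌊log₂ N⌋−1} ⌈⌈N/2^{i+1}⌉/p⌉·(22/3) + 4/3
  = (22·⌊log₂ N⌋ − 2)/3`,
where `⌊log₂ N⌋ = Nat.log 2 N` and `⌈/⌉` is the integer ceiling division; hence the
factorization costs `((22·⌊log₂ N⌋ − 2)/3)·n³` flops, i.e. `O(log₂(N)·n³)`. -/
theorem multi_stage_factorization_cost (N p : ℕ) (hN : 2 ≤ N) (hp : N ⌈/⌉ 2 ≤ p) :
    ((N ⌈/⌉ (2 * p) : ℕ) : ℚ) * (16 / 3)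
        + (∑ i ∈ Finset.Icc 1 (Nat.log 2 N - 1),
            (((N ⌈/⌉ 2 ^ (i + 1)) ⌈/⌉ p : ℕ) : ℚ) * (22 / 3))
        + 4 / 3
      = (22 * (Nat.log 2 N : ℚ) - 2) / 3 := by
  have hN2 : N ≤ 2 * (N ⌈/⌉ 2) := le_smul_ceilDiv (a := 2) (b := N) (by norm_num)
  have hp1 : 1 ≤ p := by
    rcases Nat.eq_zero_or_pos p with h | h
    · exfalso; omega
    · exact h
  have hN2p : N ≤ 2 * p := by omega
  have h1 : N ⌈/⌉ (2 * p) = 1 := ceilDiv_eq_one_of _ _ (by omega) hN2p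
  set L := Nat.log 2 N with hL
  have hL1 : 1 ≤ L := Nat.le_log_of_pow_le (by norm_num) (by simpa using hN)
  have hsum : ∀ i ∈ Finset.Icc 1 (L - 1),
      (((N ⌈/⌉ 2 ^ (i + 1)) ⌈/⌉ p : ℕ) : ℚ) * (22 / 3) = 22 / 3 := by
    intro i hi
    simp only [Finset.mem_Icc] at hi
    have hpow : 2 ^ (i + 1) ≤ N := by
      calc 2 ^ (i + 1) ≤ 2 ^ L := Nat.pow_le_pow_right (by norm_num) (by omega)
        _ ≤ N := Nat.pow_log_le_self 2 (by omega)
    have hpos : 0 < N ⌈/⌉ 2 ^ (i + 1) := by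
      by_contra h
      have h0 : N ⌈/⌉ 2 ^ (i + 1) = 0 := by omega
      have := le_smul_ceilDiv (b := N) (a := 2 ^ (i + 1)) (by positivity)
      simp [h0] at this
      omega
    have hle : N ⌈/⌉ 2 ^ (i + 1) ≤ p := by
      rw [ceilDiv_le_iff_le_mul (by positivity)]
      calc N ≤ 2 * p := hN2p
        _ ≤ 2 ^ (i + 1) * p := by
            have : 2 ≤ 2 ^ (i + 1) := by
              calc 2 = 2 ^ 1 := by norm_num
                _ ≤ 2 ^ (i + 1) := Nat.pow_le_pow_right (by norm_num) (by omega)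
            exact Nat.mul_le_mul_right p this
    rw [ceilDiv_eq_one_of _ _ hpos hle]
    norm_num
  rw [h1, Finset.sum_congr rfl hsum, Finset.sum_const, Nat.card_Icc]
  have : (L - 1 + 1 - 1 : ℕ) = L - 1 := by omega
  rw [this]
  have hcast : ((L - 1 : ℕ) : ℚ) = (L : ℚ) - 1 := by
    push_cast [hL1]; ring
  rw [nsmul_eq_mul, hcast]
  ring
end

section
/- Let N ≥ 2 and p be natural numbers with p ≥ ⌈N/2⌉. Then (∑_{i=0}^{⌊log₂ N⌋} ⌈⌈N/2^{i+1}⌉/p⌉·10) − 8·(⌈N/(2p)⌉ + 1) = 10·⌊log₂ N⌋ − 6, where ⌊log₂ N⌋ = Nat.log 2 N and ⌈·⌉ denotes integer ceiling. Consequently, with p ≥ ⌈N/2⌉ parallel threads the multi-stage forward/backward substitution for an m-column right-hand side costs (10·⌊log₂ N⌋ − 6)·n²·m flops, i.e. O(log₂(N)·n²·m), compared to O(N·n²·m) for the sequential variant. -/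
lemma ceilDiv_eq_one {a p : ℕ} (ha : 1 ≤ a) (hap : a ≤ p) : a ⌈/⌉ p = 1 := by
  rw [Nat.ceilDiv_eq_add_pred_div]
  apply Nat.div_eq_of_lt_le <;> omega

/-- For `N ≥ 2` and `p ≥ ⌈N/2⌉` parallel threads, the per-`n²·m` flop count of the
multi-stage forward/backward substitution collapses to a logarithmic expression:
`(∑_{i=0}^{⌊log₂ N⌋} ⌈⌈N/2^{i+1}⌉/p⌉·10) − 8·(⌈N/(2p)⌉ + 1) = 10·⌊log₂ N⌋ − 6`,
where `⌊log₂ N⌋ = Nat.log 2 N` and `⌈/⌉` is the integer ceiling division; hence the solve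
costs `(10·⌊log₂ N⌋ − 6)·n²·m` flops, i.e. `O(log₂(N)·n²·m)`, compared to
`O(N·n²·m)` for the sequential variant. -/
theorem multi_stage_solve_cost (N p : ℕ) (hN : 2 ≤ N) (hp : N ⌈/⌉ 2 ≤ p) :
    (∑ i ∈ Finset.range (Nat.log 2 N + 1),
        (((N ⌈/⌉ 2 ^ (i + 1)) ⌈/⌉ p : ℕ) : ℚ) * 10)
        - 8 * (((N ⌈/⌉ (2 * p) : ℕ) : ℚ) + 1)
      = 10 * (Nat.log 2 N : ℚ) - 6 := by
  have hN2p : N ≤ 2 * p := by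
    have := le_smul_ceilDiv (b := N) (a := 2) (by norm_num)
    simp only [smul_eq_mul] at this
    omega
  have hp1 : 1 ≤ p := by
    rw [Nat.ceilDiv_eq_add_pred_div] at hp
    omega
  have h1 : ∀ i, (N ⌈/⌉ 2 ^ (i + 1)) ⌈/⌉ p = 1 := by
    intro i
    apply ceilDiv_eq_one
    · rw [Nat.ceilDiv_eq_add_pred_div, Nat.one_le_div_iff (by positivity)]
      have : (0:ℕ) < 2 ^ (i+1) := by positivity
      omega
    · rw [ceilDiv_le_iff_le_mul (by positivity)]
      calc N ≤ 2 * p := hN2p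
        _ ≤ 2 ^ (i+1) * p := by
            have h2 : 2 ≤ 2 ^ (i+1) := by
              calc 2 = 2 ^ 1 := rfl
                _ ≤ 2 ^ (i+1) := Nat.pow_le_pow_right (by norm_num) (by omega)
            exact Nat.mul_le_mul_right p h2
  have h2 : N ⌈/⌉ (2 * p) = 1 := ceilDiv_eq_one (by omega) hN2p
  simp only [h1, h2, Nat.cast_one, one_mul]
  rw [Finset.sum_const, Finset.card_range]
  ring
end

section
/- Let N and n be positive natural numbers and let Ψ be a real symmetric positive definite matrix indexed by Fin N × Fin n that is block tridiagonal. Then there exists a matrix L indexed by Fin N × Fin n such that: (i) L((i,a),(j,b)) = 0 whenever (i,a) is lexicographically smaller than (j,b) (L is lower triangular); (ii) every diagonal entry L((i,a),(i,a)) is strictly positive; (iii) L · Lᵀ = Ψ; and (iv) L((i,a),(j,b)) = 0 whenever j + 1 < i. In other words, the Cholesky factor of a block tridiagonal symmetric positive definite matrix is block lower bidiagonal: the factorization preserves the block tridiagonal structure without fill-in. -/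
/-!
Take the LDL decomposition `S = L D Lᴴ`, where `L⁻¹` comes from Gram–Schmidt applied to the
standard basis, so that `L` is unit lower triangular and `D` is positive. Since
`L D = S L⁻ᴴ` and `L⁻ᴴ` is upper triangular, the entry `(L D) i j` only involves the entries
`S i k` with `k ≤ j`. Hence the Cholesky factor `L √D` inherits the leading zeros of every row
of `S`. Order `Fin N × Fin n` lexicographically: in a block tridiagonal matrix, row `(i, a)`
vanishes on all blocks `j` with `j + 1 < i`, and these blocks form an initial segment.
-/

open Matrix

namespace InnerProductSpace

variable {𝕜 E ι : Type*} [RCLike 𝕜] [NormedAddCommGroup E] [InnerProductSpace 𝕜 E]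
  [LinearOrder ι] [LocallyFiniteOrderBot ι] [WellFoundedLT ι]

theorem gramSchmidt_repr_self (b : Module.Basis ι 𝕜 E) (i : ι) :
    b.repr (gramSchmidt 𝕜 b i) i = 1 := by
  have h := congrArg (fun v => b.repr v i) (gramSchmidt_def'' 𝕜 b i)
  simp only [map_add, map_sum, map_smul, Finsupp.add_apply, Finsupp.finsetSum_apply,
    Finsupp.smul_apply, Module.Basis.repr_self, Finsupp.single_eq_same] at h
  rw [Finset.sum_eq_zero fun j hj => by
    rw [gramSchmidt_triangular (Finset.mem_Iio.mp hj) b, smul_zero], add_zero] at h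
  exact h.symm

end InnerProductSpace

namespace Matrix

variable {ι R : Type*} [LinearOrder ι] [Fintype ι] [NonUnitalNonAssocSemiring R]

theorem mul_apply_self_of_blockTriangular_toDual {A B : Matrix ι ι R}
    (hA : A.BlockTriangular OrderDual.toDual) (hB : B.BlockTriangular OrderDual.toDual) (i : ι) :
    (A * B) i i = A i i * B i i := by
  refine Finset.sum_eq_single i (fun k _ hki => show A i k * B k i = 0 from ?_) (by simp)
  rcases hki.lt_or_gt with hlt | hgt
  · rw [hB hlt, mul_zero]
  · rw [hA hgt, zero_mul]

end Matrix

namespace LDL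

open scoped ComplexOrder

variable {𝕜 ι : Type*} [RCLike 𝕜] [LinearOrder ι] [WellFoundedLT ι] [LocallyFiniteOrderBot ι]
  [Fintype ι] {S : Matrix ι ι 𝕜} (hS : S.PosDef)

theorem lowerInv_blockTriangular : (lowerInv hS).BlockTriangular OrderDual.toDual :=
  fun _ _ hij => lowerInv_triangular hS hij

theorem lowerInv_diag (i : ι) : lowerInv hS i i = 1 := by
  let := Sᵀ.toNormedAddCommGroup hS.transpose
  let := Sᵀ.toInnerProductSpace hS.transpose.posSemidef
  have h := InnerProductSpace.gramSchmidt_repr_self (Pi.basisFun 𝕜 ι) i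
  rwa [Pi.basisFun_repr] at h

theorem diagEntries_pos (i : ι) : 0 < diagEntries hS i := by
  have hrow : star (lowerInv hS i) ≠ 0 := fun h => by
    simpa [lowerInv_diag] using congrFun (star_eq_zero.mp h) i
  simpa [diagEntries, EuclideanSpace.inner_toLp_toLp, dotProduct_comm] using
    hS.dotProduct_mulVec_pos hrow

theorem lower_blockTriangular : (lower hS).BlockTriangular OrderDual.toDual :=
  blockTriangular_inv_of_blockTriangular (lowerInv_blockTriangular hS)

theorem lower_diag (i : ι) : lower hS i i = 1 := by
  have h : (lower hS * lowerInv hS) i i = (1 : Matrix ι ι 𝕜) i i :=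
    congrFun (congrFun (inv_mul_of_invertible (lowerInv hS)) i) i
  rwa [mul_apply_self_of_blockTriangular_toDual (lower_blockTriangular hS)
    (lowerInv_blockTriangular hS), lowerInv_diag, mul_one, one_apply_eq] at h

theorem lower_mul_diag : lower hS * diag hS = S * (lowerInv hS)ᴴ := by
  have hinv : lowerInv hS * lower hS = 1 := mul_inv_of_invertible (lowerInv hS)
  calc lower hS * diag hS = lower hS * diag hS * (lowerInv hS * lower hS)ᴴ := by
        rw [hinv, conjTranspose_one, Matrix.mul_one]
    _ = lower hS * diag hS * (lower hS)ᴴ * (lowerInv hS)ᴴ := by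
        simp only [conjTranspose_mul, Matrix.mul_assoc]
    _ = S * (lowerInv hS)ᴴ := by rw [lower_conj_diag]

theorem lower_eq_zero_of_forall_le {i j : ι} (h : ∀ k ≤ j, S i k = 0) : lower hS i j = 0 := by
  have hij := congrFun (congrFun (lower_mul_diag hS) i) j
  rw [diag, mul_diagonal, mul_apply, Finset.sum_eq_zero fun k _ => ?_] at hij
  · exact (mul_eq_zero.mp hij).resolve_right (diagEntries_pos hS j).ne'
  · rcases le_or_gt k j with hkj | hjk
    · rw [h k hkj, zero_mul]
    · rw [conjTranspose_apply, lowerInv_triangular hS hjk, star_zero, mul_zero]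

end LDL

theorem Matrix.PosDef.exists_cholesky_no_fill_in {ι : Type*} [LinearOrder ι] [Fintype ι]
    {S : Matrix ι ι ℝ} (hS : S.PosDef) :
    ∃ L : Matrix ι ι ℝ, (∀ i j, i < j → L i j = 0) ∧ (∀ i, 0 < L i i) ∧ L * Lᵀ = S ∧
      ∀ i j, (∀ k ≤ j, S i k = 0) → L i j = 0 := by
  let : LocallyFiniteOrderBot ι := .ofIic' ι (fun j => {i | i ≤ j}) (by simp)
  let D : Matrix ι ι ℝ := diagonal fun k => √(LDL.diagEntries hS k)
  have hD : D * Dᵀ = LDL.diag hS := by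
    rw [diagonal_transpose, diagonal_mul_diagonal, LDL.diag]
    exact congrArg diagonal (funext fun k => Real.mul_self_sqrt (LDL.diagEntries_pos hS k).le)
  refine ⟨LDL.lower hS * D, fun i j hij => ?_, fun i => ?_, ?_, fun i j h => ?_⟩
  · rw [mul_diagonal, LDL.lower_blockTriangular hS hij, zero_mul]
  · rw [mul_diagonal, LDL.lower_diag, one_mul]
    exact Real.sqrt_pos.mpr (LDL.diagEntries_pos hS i)
  · rw [transpose_mul, Matrix.mul_assoc, ← Matrix.mul_assoc D, hD,
      ← conjTranspose_eq_transpose_of_trivial, ← Matrix.mul_assoc, LDL.lower_conj_diag]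
  · rw [mul_diagonal, LDL.lower_eq_zero_of_forall_le hS h, zero_mul]

theorem block_tridiagonal_cholesky_no_fill_in_general (N n : ℕ)
    (Ψ : Matrix (Fin N × Fin n) (Fin N × Fin n) ℝ) (hpd : Ψ.PosDef)
    (htri : ∀ (i j : Fin N) (a b : Fin n),
      ((i : ℕ) + 1 < (j : ℕ) ∨ (j : ℕ) + 1 < (i : ℕ)) → Ψ (i, a) (j, b) = 0) :
    ∃ L : Matrix (Fin N × Fin n) (Fin N × Fin n) ℝ,
      (∀ (i j : Fin N) (a b : Fin n),
        ((i : ℕ) < (j : ℕ) ∨ (i = j ∧ (a : ℕ) < (b : ℕ))) → L (i, a) (j, b) = 0) ∧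
      (∀ (i : Fin N) (a : Fin n), 0 < L (i, a) (i, a)) ∧
      L * Lᵀ = Ψ ∧
      (∀ (i j : Fin N) (a b : Fin n), (j : ℕ) + 1 < (i : ℕ) → L (i, a) (j, b) = 0) := by
  obtain ⟨L, hlower, hdiag, hprod, hprofile⟩ :=
    (hpd.submatrix ofLex.injective).exists_cholesky_no_fill_in
  refine ⟨L.submatrix toLex toLex, fun i j a b hlt => hlower _ _ (Prod.Lex.toLex_lt_toLex.mpr hlt),
    fun i a => hdiag _, ?_, fun i j a b hji => hprofile _ _ fun k hk => htri _ _ _ _ ?_⟩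
  · rw [transpose_submatrix, submatrix_mul_equiv, hprod, submatrix_submatrix]
    rfl
  · have hkj : k.1 ≤ j := Prod.Lex.monotone_fst k (toLex (j, b)) hk
    exact Or.inr (by omega)

/-- The Cholesky factor of a block tridiagonal symmetric positive definite matrix is block
lower bidiagonal: if `Ψ` (indexed by `Fin N × Fin n`, block index first) is symmetric
positive definite and block tridiagonal, then there is a matrix `L` that is lower
triangular for the lexicographic order, has strictly positive diagonal entries, satisfies
`L * Lᵀ = Ψ`, and whose block `(i, j)` vanishes whenever `j + 1 < i`: the factorization
preserves the block tridiagonal structure without fill-in. -/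
theorem block_tridiagonal_cholesky_no_fill_in (N n : ℕ) (hN : 0 < N) (hn : 0 < n)
    (Ψ : Matrix (Fin N × Fin n) (Fin N × Fin n) ℝ) (hsym : Ψ.IsSymm) (hpd : Ψ.PosDef)
    (htri : ∀ (i j : Fin N) (a b : Fin n),
      ((i : ℕ) + 1 < (j : ℕ) ∨ (j : ℕ) + 1 < (i : ℕ)) → Ψ (i, a) (j, b) = 0) :
    ∃ L : Matrix (Fin N × Fin n) (Fin N × Fin n) ℝ,
      (∀ (i j : Fin N) (a b : Fin n),
        ((i : ℕ) < (j : ℕ) ∨ (i = j ∧ (a : ℕ) < (b : ℕ))) → L (i, a) (j, b) = 0) ∧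
      (∀ (i : Fin N) (a : Fin n), 0 < L (i, a) (i, a)) ∧
      L * Lᵀ = Ψ ∧
      (∀ (i j : Fin N) (a b : Fin n), (j : ℕ) + 1 < (i : ℕ) → L (i, a) (j, b) = 0) :=
  block_tridiagonal_cholesky_no_fill_in_general N n Ψ hpd htri
end

section
/- Let N and n be positive natural numbers and let Ψ be a real symmetric positive definite matrix indexed by Fin N × Fin n that is block tridiagonal, with blocks labelled 1,…,N (block index i : Fin N corresponds to label i + 1). Define the odd–even order ≼ on block labels by: r ≼ c iff (r is odd and c is even) or (r and c have the same parity and r ≤ c). Then there exists a matrix L indexed by Fin N × Fin n such that: (i) L((i,a),(j,b)) = 0 whenever the block label of (i,a) strictly precedes that of (j,b) in ≼, or the block labels are equal and a < b (L is lower triangular with respect to the odd–even ordering); (ii) every diagonal entry of L is strictly positive; (iii) L · Lᵀ = Ψ; and (iv) for block labels r, c with c strictly preceding r in ≼, the block L(r,c) is the zero block unless either c is odd and r ∈ {c − 1, c + 1}, or c is even and r = c + 2. In other words, after the single-stage odd–even permutation the Cholesky factor has fill-in only in the blocks directly below the diagonal of the trailing even-indexed part. -/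
/-!
Order the indices by the odd–even key of their block label and then by the inner index, and let
`L` be the Cholesky factor of `Ψ` for this order (a rescaled LDL decomposition). The `(x, y)` entry
of `L * Lᵀ = Ψ` reads `L x y * L y y = Ψ x y - ∑_{k before y} L x k * L y k`, so by induction on
`y` an entry below the diagonal vanishes as soon as `Ψ x y = 0` and no earlier column carries
admissible entries in both rows `x` and `y`. For the admissible block pattern (same block, or `c`
odd and `r = c ± 1`, or `c` even and `r = c + 2`), two rows admissible in a common column are
admissible for each other, and a non-admissible pair of distinct blocks is at distance at least
two, where the block tridiagonal `Ψ` vanishes.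
-/

open Matrix

/-- The odd–even (single-stage permutation) order on block labels `1,…,N`:
`r ≼ c` iff `r` is odd and `c` is even, or `r` and `c` have the same parity and `r ≤ c`. -/
def oddEvenLe (r c : ℕ) : Prop :=
  (Odd r ∧ Even c) ∨ (r % 2 = c % 2 ∧ r ≤ c)

open Function OrderDual

structure IsCholeskyFactor {m α : Type*} [Fintype m] [LT α] (κ : m → α) (S L : Matrix m m ℝ) :
    Prop where
  blockTriangular : L.BlockTriangular (toDual ∘ κ)
  diag_pos : ∀ x, 0 < L x x
  mul_transpose : L * Lᵀ = S

section Cholesky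

variable {m α : Type*} [Fintype m] [LinearOrder α] {κ : m → α} {S L : Matrix m m ℝ}

theorem exists_isCholeskyFactor (hκ : Injective κ) (hS : S.PosDef) :
    ∃ L, IsCholeskyFactor κ S L := by
  classical
  let : LinearOrder m := LinearOrder.lift' κ hκ
  let : LocallyFiniteOrderBot m := LocallyFiniteOrderBot.ofIic m (fun a => {x | x ≤ a}) (by simp)
  have : WellFoundedLT m := Finite.to_wellFoundedLT
  set L₀ := LDL.lower hS
  have hL₀ : L₀.BlockTriangular toDual :=
    blockTriangular_inv_of_blockTriangular fun _ _ h => LDL.lowerInv_triangular hS h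
  have hd : ∀ x, 0 < LDL.diagEntries hS x := by
    rw [← posDef_diagonal_iff, ← LDL.diag, LDL.diag_eq_lowerInv_conj]
    exact hS.mul_mul_conjTranspose_same (vecMul_injective_of_invertible _)
  have hdiag : ∀ x, L₀ x x ≠ 0 := by
    have hdet : L₀.det ≠ 0 :=
      (isUnit_nonsing_inv_det _ (isUnit_det_of_invertible (LDL.lowerInv hS))).ne_zero
    rw [det_of_isLowerTriangular L₀ hL₀] at hdet
    exact fun x => Finset.prod_ne_zero_iff.mp hdet x (Finset.mem_univ x)
  let s : m → ℝ := fun x => SignType.sign (L₀ x x) * √(LDL.diagEntries hS x)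
  refine ⟨L₀ * diagonal s, fun x y h => ?_, fun x => ?_, ?_⟩
  · simp [mul_diagonal, hL₀ h]
  · simp only [mul_diagonal, s, ← mul_assoc, self_mul_sign]
    exact mul_pos (abs_pos.mpr (hdiag x)) (Real.sqrt_pos.mpr (hd x))
  · have hs : (fun x => s x * s x) = LDL.diagEntries hS := funext fun x => by
      rcases (hdiag x).lt_or_gt with h | h <;>
        simp [s, sign_neg, sign_pos, h, Real.mul_self_sqrt (hd x).le]
    rw [transpose_mul, diagonal_transpose, Matrix.mul_assoc, ← Matrix.mul_assoc (diagonal s),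
      diagonal_mul_diagonal, hs, ← Matrix.mul_assoc, ← LDL.diag,
      ← conjTranspose_eq_transpose_of_trivial, LDL.lower_conj_diag]

theorem IsCholeskyFactor.apply_eq_zero_of_forall_mul_eq_zero (hκ : Injective κ)
    (hL : IsCholeskyFactor κ S L) {x y : m} (hS : S x y = 0)
    (h : ∀ k, κ k < κ y → L x k * L y k = 0) : L x y = 0 := by
  have hsum : ∑ k, L x k * L y k = 0 := by
    rw [← hS, ← hL.mul_transpose, mul_apply]
    rfl
  rw [Finset.sum_eq_single y (fun k _ hk => ?_) (by simp)] at hsum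
  · exact (mul_eq_zero.mp hsum).resolve_right (hL.diag_pos y).ne'
  · rcases (hκ.ne hk).lt_or_gt with hlt | hgt
    · exact h k hlt
    · rw [hL.blockTriangular hgt, mul_zero]

theorem IsCholeskyFactor.apply_eq_zero_of_not_fill (hκ : Injective κ)
    (hL : IsCholeskyFactor κ S L) (F : m → m → Prop)
    (hF : ∀ x y, κ y < κ x → ¬F x y → S x y = 0 ∧ ∀ k, κ k < κ y → F x k → ¬F y k)
    {x y : m} (hyx : κ y < κ x) (hxy : ¬F x y) : L x y = 0 := by
  have hwf : WellFounded fun a b : m => κ a < κ b :=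
    @Finite.wellFounded_of_trans_of_irrefl _ _ _ ⟨fun _ _ _ => lt_trans⟩ ⟨fun _ => lt_irrefl _⟩
  induction y using hwf.induction generalizing x with
  | _ y ih =>
  obtain ⟨hS, hk⟩ := hF x y hyx hxy
  refine hL.apply_eq_zero_of_forall_mul_eq_zero hκ hS fun k hky => ?_
  by_cases hxk : F x k
  · rw [ih k hky hky (hk k hky hxk), mul_zero]
  · rw [ih k hky (hky.trans hyx) hxk, zero_mul]

end Cholesky

def oddEvenFill (r c : ℕ) : Prop :=
  (Odd c ∧ (r = c - 1 ∨ r = c + 1)) ∨ (Even c ∧ r = c + 2)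

def oddEvenKey (r : ℕ) : ℕ ×ₗ ℕ := toLex ((r + 1) % 2, r)

theorem oddEvenKey_injective : Injective oddEvenKey := fun _ _ h => congrArg (·.2) h

theorem oddEvenKey_le_iff {r c : ℕ} : oddEvenKey r ≤ oddEvenKey c ↔ oddEvenLe r c := by
  simp only [oddEvenKey, Prod.Lex.toLex_le_toLex, oddEvenLe, Nat.odd_iff, Nat.even_iff]
  omega

theorem oddEvenKey_lt_iff {r c : ℕ} : oddEvenKey r < oddEvenKey c ↔ oddEvenLe r c ∧ r ≠ c := by
  rw [lt_iff_le_and_ne, oddEvenKey_le_iff, oddEvenKey_injective.ne_iff]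

theorem add_one_lt_or_add_one_lt_of_not_oddEvenFill {r c : ℕ} (hcr : oddEvenLe c r) (hne : c ≠ r)
    (hfill : ¬oddEvenFill r c) : r + 1 < c ∨ c + 1 < r := by
  simp only [oddEvenFill, oddEvenLe, Nat.odd_iff, Nat.even_iff] at *
  omega

theorem oddEvenFill_of_common_column {r c p : ℕ} (hcr : oddEvenLe c r) (hne : c ≠ r)
    (hr : r = p ∨ oddEvenFill r p) (hc : c = p ∨ oddEvenFill c p) :
    oddEvenFill r c := by
  simp only [oddEvenFill, oddEvenLe, Nat.odd_iff, Nat.even_iff] at *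
  omega

def oddEvenIndexKey {N n : ℕ} (x : Fin N × Fin n) : (ℕ ×ₗ ℕ) ×ₗ Fin n :=
  toLex (oddEvenKey (x.1 + 1), x.2)

theorem oddEvenIndexKey_injective {N n : ℕ} : Injective (oddEvenIndexKey (N := N) (n := n)) := by
  rintro ⟨i, a⟩ ⟨j, b⟩ h
  simp only [oddEvenIndexKey, toLex_inj, Prod.mk.injEq, oddEvenKey_injective.eq_iff, add_left_inj,
    Fin.val_inj] at h
  exact Prod.ext h.1 h.2

theorem oddEvenIndexKey_lt_iff {N n : ℕ} {i j : Fin N} {a b : Fin n} :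
    oddEvenIndexKey (i, a) < oddEvenIndexKey (j, b) ↔
      (oddEvenLe ((i : ℕ) + 1) ((j : ℕ) + 1) ∧ (i : ℕ) + 1 ≠ (j : ℕ) + 1) ∨ (i = j ∧ a < b) := by
  simp only [oddEvenIndexKey, Prod.Lex.toLex_lt_toLex, oddEvenKey_lt_iff,
    oddEvenKey_injective.eq_iff, add_left_inj, Fin.val_inj]

theorem single_stage_cholesky_fill_in_general (N n : ℕ)
    (Ψ : Matrix (Fin N × Fin n) (Fin N × Fin n) ℝ) (hpd : Ψ.PosDef)
    (htri : ∀ (i j : Fin N) (a b : Fin n),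
      ((i : ℕ) + 1 < (j : ℕ) ∨ (j : ℕ) + 1 < (i : ℕ)) → Ψ (i, a) (j, b) = 0) :
    ∃ L : Matrix (Fin N × Fin n) (Fin N × Fin n) ℝ,
      (∀ (i j : Fin N) (a b : Fin n),
        ((oddEvenLe ((i : ℕ) + 1) ((j : ℕ) + 1) ∧ (i : ℕ) + 1 ≠ (j : ℕ) + 1) ∨
            (i = j ∧ (a : ℕ) < (b : ℕ))) →
          L (i, a) (j, b) = 0) ∧
      (∀ (i : Fin N) (a : Fin n), 0 < L (i, a) (i, a)) ∧
      L * Lᵀ = Ψ ∧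
      (∀ i j : Fin N,
        (oddEvenLe ((j : ℕ) + 1) ((i : ℕ) + 1) ∧ (j : ℕ) + 1 ≠ (i : ℕ) + 1) →
        ¬((Odd ((j : ℕ) + 1) ∧
              ((i : ℕ) + 1 = ((j : ℕ) + 1) - 1 ∨ (i : ℕ) + 1 = ((j : ℕ) + 1) + 1)) ∨
            (Even ((j : ℕ) + 1) ∧ (i : ℕ) + 1 = ((j : ℕ) + 1) + 2)) →
        ∀ (a b : Fin n), L (i, a) (j, b) = 0) := by
  obtain ⟨L, hL⟩ := exists_isCholeskyFactor oddEvenIndexKey_injective hpd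
  refine ⟨L, fun i j a b h => hL.blockTriangular (oddEvenIndexKey_lt_iff.mpr h),
    fun i a => hL.diag_pos _, hL.mul_transpose, fun i j hji hfill a b => ?_⟩
  let F (x y : Fin N × Fin n) : Prop :=
    (x.1 : ℕ) + 1 = y.1 + 1 ∨ oddEvenFill (x.1 + 1) (y.1 + 1)
  have hF : ∀ x y, oddEvenIndexKey y < oddEvenIndexKey x → ¬F x y →
      Ψ x y = 0 ∧ ∀ k, oddEvenIndexKey k < oddEvenIndexKey y → F x k → ¬F y k := by
    rintro ⟨i, a⟩ ⟨j, b⟩ hyx hxy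
    simp only [F, not_or] at hxy
    obtain ⟨hji, hne⟩ :=
      (oddEvenIndexKey_lt_iff.mp hyx).resolve_right fun h => hxy.1 (by rw [h.1])
    refine ⟨htri i j a b ?_,
      fun k _ hxk hyk => hxy.2 (oddEvenFill_of_common_column hji hne hxk hyk)⟩
    have := add_one_lt_or_add_one_lt_of_not_oddEvenFill hji hne hxy.2
    omega
  refine hL.apply_eq_zero_of_not_fill oddEvenIndexKey_injective F hF
    (oddEvenIndexKey_lt_iff.mpr (Or.inl hji)) ?_
  simp only [F, not_or]
  exact ⟨hji.2.symm, hfill⟩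

/-- After the single-stage odd–even permutation, the Cholesky factor of a block
tridiagonal symmetric positive definite matrix has fill-in only in the blocks directly
below the diagonal of the trailing even-indexed part: there exists `L`, lower triangular
with respect to the odd–even ordering of the block labels `i + 1`, with strictly positive
diagonal and `L * Lᵀ = Ψ`, such that for block labels `r, c` with `c` strictly preceding
`r`, the block `L(r, c)` vanishes unless `c` is odd and `r ∈ {c − 1, c + 1}`, or `c` is
even and `r = c + 2`. -/
theorem single_stage_cholesky_fill_in (N n : ℕ) (hN : 0 < N) (hn : 0 < n)
    (Ψ : Matrix (Fin N × Fin n) (Fin N × Fin n) ℝ) (hsym : Ψ.IsSymm) (hpd : Ψ.PosDef)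
    (htri : ∀ (i j : Fin N) (a b : Fin n),
      ((i : ℕ) + 1 < (j : ℕ) ∨ (j : ℕ) + 1 < (i : ℕ)) → Ψ (i, a) (j, b) = 0) :
    ∃ L : Matrix (Fin N × Fin n) (Fin N × Fin n) ℝ,
      (∀ (i j : Fin N) (a b : Fin n),
        ((oddEvenLe ((i : ℕ) + 1) ((j : ℕ) + 1) ∧ (i : ℕ) + 1 ≠ (j : ℕ) + 1) ∨
            (i = j ∧ (a : ℕ) < (b : ℕ))) →
          L (i, a) (j, b) = 0) ∧
      (∀ (i : Fin N) (a : Fin n), 0 < L (i, a) (i, a)) ∧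
      L * Lᵀ = Ψ ∧
      (∀ i j : Fin N,
        (oddEvenLe ((j : ℕ) + 1) ((i : ℕ) + 1) ∧ (j : ℕ) + 1 ≠ (i : ℕ) + 1) →
        ¬((Odd ((j : ℕ) + 1) ∧
              ((i : ℕ) + 1 = ((j : ℕ) + 1) - 1 ∨ (i : ℕ) + 1 = ((j : ℕ) + 1) + 1)) ∨
            (Even ((j : ℕ) + 1) ∧ (i : ℕ) + 1 = ((j : ℕ) + 1) + 2)) →
        ∀ (a b : Fin n), L (i, a) (j, b) = 0) :=
  single_stage_cholesky_fill_in_general N n Ψ hpd htri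
end

section
/- Let N and n be positive natural numbers and let Ψ be a real symmetric positive definite matrix indexed by Fin N × Fin n that is block tridiagonal, with blocks labelled 1,…,N. Write ν₂(i) for the 2-adic valuation of i, and define the nested-dissection order ≼ on block labels by: r ≼ c iff ν₂(r) < ν₂(c), or ν₂(r) = ν₂(c) and r ≤ c. Then there exists a matrix L indexed by Fin N × Fin n such that: (i) L((i,a),(j,b)) = 0 whenever the block label of (i,a) strictly precedes that of (j,b) in ≼, or the block labels are equal and a < b (L is lower triangular with respect to the nested-dissection ordering); (ii) every diagonal entry of L is strictly positive; (iii) L · Lᵀ = Ψ; and (iv) for block labels r ≠ c with c strictly preceding r in ≼, the block L(r,c) is the zero block unless r = c + 2^{ν₂(c)} or r = c − 2^{ν₂(c)}. That is, in the multi-stage permuted factorization, each column at stage s = 2^{ν₂(c)} has nonzero off-diagonal blocks only in the rows of its two neighbours c − s and c + s. -/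
/-!
Cholesky elimination along a linear order creates an entry `(x, y)` of the factor only if `x`
and `y` are linked in `M` or share an earlier neighbour `z` in the factor. Hence any pattern `P`
that contains the support of `M` and is closed under this fill rule contains the support of the
Cholesky factor, by induction on the size through Schur complements.

For a block tridiagonal matrix eliminated in nested-dissection order, take `P` to relate block
labels that are equal or of which one is a stage neighbour `c ± 2 ^ ν₂(c)` of the other. It
contains consecutive labels, and it is fill-closed: an earlier `z` can only be linked to later
labels as their stage neighbour, and the two stage neighbours `2 ^ (v + 1) * t` and
`2 ^ (v + 1) * (t + 1)` of `z = 2 ^ v * (2 * t + 1)` are stage neighbours of each other.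
-/

open Matrix

/-- The nested-dissection (multi-stage permutation) order on block labels `1,…,N`:
`r ≼ c` iff `ν₂(r) < ν₂(c)`, or `ν₂(r) = ν₂(c)` and `r ≤ c`, where `ν₂` is the 2-adic
valuation `padicValNat 2`. -/
def nestedDissectionLe (r c : ℕ) : Prop :=
  padicValNat 2 r < padicValNat 2 c ∨ (padicValNat 2 r = padicValNat 2 c ∧ r ≤ c)

namespace Matrix

variable {k : ℕ}

noncomputable def pivotSchur (M : Matrix (Fin (k + 1)) (Fin (k + 1)) ℝ) :
    Matrix (Fin k) (Fin k) ℝ :=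
  M.submatrix Fin.succ Fin.succ -
    (M 0 0)⁻¹ • vecMulVec (fun r => M r.succ 0) (fun r => M r.succ 0)

theorem pivotSchur_apply (M : Matrix (Fin (k + 1)) (Fin (k + 1)) ℝ) (r c : Fin k) :
    M.pivotSchur r c = M r.succ c.succ - (M 0 0)⁻¹ * (M r.succ 0 * M c.succ 0) := by
  simp [pivotSchur, vecMulVec_apply]

theorem PosDef.pivotSchur {M : Matrix (Fin (k + 1)) (Fin (k + 1)) ℝ} (hM : M.PosDef) :
    M.pivotSchur.PosDef := by
  have hα : M 0 0 ≠ 0 := hM.diag_pos.ne'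
  have hsymm : ∀ p q, M q p = M p q := fun p q => hM.isHermitian.apply p q
  -- `E *ᵥ x` extends `x` by the first coordinate that clears entry `0` of `M *ᵥ (E *ᵥ x)`,
  -- so `Eᵀ * M * E` is the Schur complement.
  let E : Matrix (Fin (k + 1)) (Fin k) ℝ :=
    of fun p r => vecCons (-(M r.succ 0 / M 0 0)) (fun q => (1 : Matrix (Fin k) (Fin k) ℝ) q r) p
  have hE : Function.Injective E.mulVec := by
    intro x y h
    funext r
    simpa [E, mulVec, dotProduct, one_apply] using congrFun h r.succ
  convert hM.conjTranspose_mul_mul_same hE using 1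
  ext r c
  simp [Matrix.pivotSchur, E, mul_apply, Fin.sum_univ_succ, one_apply, hsymm, vecMulVec_apply]
  field_simp
  ring

/-- Borders a Cholesky factor `L` of `M.pivotSchur` into one of `M`. -/
noncomputable def cholBorder (M : Matrix (Fin (k + 1)) (Fin (k + 1)) ℝ)
    (L : Matrix (Fin k) (Fin k) ℝ) : Matrix (Fin (k + 1)) (Fin (k + 1)) ℝ :=
  of (vecCons (vecCons √(M 0 0) 0) fun r => vecCons (M r.succ 0 / √(M 0 0)) (L r))

theorem cholBorder_mul_transpose {M : Matrix (Fin (k + 1)) (Fin (k + 1)) ℝ}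
    (hM : M.IsHermitian) (hα : 0 < M 0 0) {L : Matrix (Fin k) (Fin k) ℝ}
    (hL : L * Lᵀ = M.pivotSchur) : M.cholBorder L * (M.cholBorder L)ᵀ = M := by
  have hsymm : ∀ p q, M q p = M p q := fun p q => hM.apply p q
  have hLL : ∀ r c, ∑ z, L r z * L c z = M.pivotSchur r c := fun r c => by
    simpa [mul_apply] using congrFun (congrFun hL r) c
  ext p q
  cases p using Fin.cases <;> cases q using Fin.cases
  all_goals simp [cholBorder, mul_apply, Fin.sum_univ_succ, hLL, pivotSchur_apply, hsymm]
  all_goals field_simp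
  all_goals rw [Real.sq_sqrt hα.le]
  ring

theorem PosDef.exists_sparse_cholesky_fin {M : Matrix (Fin k) (Fin k) ℝ} (hM : M.PosDef)
    (P : Fin k → Fin k → Prop) (hsupp : ∀ x y, M x y ≠ 0 → P x y)
    (hfill : ∀ x y z, z < x → z < y → P x z → P y z → P x y) :
    ∃ L : Matrix (Fin k) (Fin k) ℝ, (∀ x y, x < y → L x y = 0) ∧ (∀ x, 0 < L x x) ∧
      L * Lᵀ = M ∧ ∀ x y, ¬ P x y → L x y = 0 := by
  induction k with
  | zero => exact ⟨0, fun x => x.elim0, fun x => x.elim0, Subsingleton.elim _ _, fun x => x.elim0⟩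
  | succ k ih =>
    have hα : 0 < M 0 0 := hM.diag_pos
    have hsupp' (r c : Fin k) (h : M.pivotSchur r c ≠ 0) : P r.succ c.succ := by
      rw [pivotSchur_apply] at h
      by_cases hrc : M r.succ c.succ = 0
      · have hr : M r.succ 0 ≠ 0 := fun h0 => h (by simp [hrc, h0])
        have hc : M c.succ 0 ≠ 0 := fun h0 => h (by simp [hrc, h0])
        exact hfill _ _ 0 r.succ_pos c.succ_pos (hsupp _ _ hr) (hsupp _ _ hc)
      · exact hsupp _ _ hrc
    obtain ⟨L, hlow, hdiag, hLL, hpat⟩ := ih hM.pivotSchur (fun r c => P r.succ c.succ) hsupp'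
      (fun x y z hx hy => hfill _ _ _ (Fin.succ_lt_succ_iff.2 hx) (Fin.succ_lt_succ_iff.2 hy))
    refine ⟨M.cholBorder L, ?_, ?_, cholBorder_mul_transpose hM.isHermitian hα hLL, ?_⟩
    · intro p q hpq
      cases p using Fin.cases <;> cases q using Fin.cases
      · exact absurd hpq (lt_irrefl 0)
      · simp [cholBorder]
      · exact absurd hpq (Fin.not_lt_zero _)
      · simpa [cholBorder] using hlow _ _ (Fin.succ_lt_succ_iff.1 hpq)
    · intro p
      cases p using Fin.cases <;> simp [cholBorder, hα, hdiag]
    · intro p q hpq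
      cases p using Fin.cases <;> cases q using Fin.cases
      · exact absurd (hsupp 0 0 hα.ne') hpq
      · simp [cholBorder]
      · simp [cholBorder, not_not.1 (mt (hsupp _ _) hpq)]
      · simpa [cholBorder] using hpat _ _ hpq

theorem PosDef.exists_sparse_cholesky {ι β : Type*} [Fintype ι] [LinearOrder β]
    {w : ι → β} (hw : Function.Injective w) {M : Matrix ι ι ℝ} (hM : M.PosDef)
    (P : ι → ι → Prop) (hsupp : ∀ x y, M x y ≠ 0 → P x y)
    (hfill : ∀ x y z, w z < w x → w z < w y → P x z → P y z → P x y) :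
    ∃ L : Matrix ι ι ℝ, (∀ x y, w x < w y → L x y = 0) ∧ (∀ x, 0 < L x x) ∧
      L * Lᵀ = M ∧ ∀ x y, ¬ P x y → L x y = 0 := by
  let _ : LinearOrder ι := LinearOrder.lift' w hw
  let e := Fintype.orderIsoFinOfCardEq ι rfl
  obtain ⟨L, hlow, hdiag, hLL, hpat⟩ :=
    (hM.submatrix e.injective).exists_sparse_cholesky_fin (fun p q => P (e p) (e q))
      (fun p q => hsupp (e p) (e q))
      (fun p q r hrp hrq => hfill _ _ _ (e.strictMono hrp) (e.strictMono hrq))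
  refine ⟨L.submatrix e.symm e.symm, fun x y hxy => hlow _ _ (e.symm.lt_iff_lt.2 hxy),
    fun x => hdiag _, ?_, fun x y hxy => hpat _ _ (by simpa using hxy)⟩
  rw [transpose_submatrix, ← submatrix_mul _ _ _ _ _ e.symm.bijective, hLL]
  ext x y
  simp

end Matrix

theorem padicValNat_two_pow_mul_odd (k : ℕ) {m : ℕ} (hm : Odd m) :
    padicValNat 2 (2 ^ k * m) = k := by
  rw [padicValNat.mul (by positivity) hm.pos.ne', padicValNat.prime_pow,
    padicValNat.eq_zero_of_not_dvd hm.not_two_dvd_nat, add_zero]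

/-- `r = c ± 2 ^ ν₂(c)`, written without truncated subtraction. -/
def IsStageNeighbor (c r : ℕ) : Prop :=
  r = c + 2 ^ padicValNat 2 c ∨ r + 2 ^ padicValNat 2 c = c

def StageAdj (r c : ℕ) : Prop :=
  r = c ∨ IsStageNeighbor c r ∨ IsStageNeighbor r c

theorem StageAdj.symm {r c : ℕ} (h : StageAdj r c) : StageAdj c r := by
  unfold StageAdj at *
  tauto

theorem stageAdj_two_pow_mul_succ (k u : ℕ) : StageAdj (2 ^ k * u) (2 ^ k * (u + 1)) := by
  rcases Nat.even_or_odd u with hu | hu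
  · refine Or.inr (Or.inl (Or.inr ?_))
    rw [padicValNat_two_pow_mul_odd k hu.add_one]
    ring
  · refine Or.inr (Or.inr (Or.inl ?_))
    rw [padicValNat_two_pow_mul_odd k hu]
    ring

theorem stageAdj_succ (u : ℕ) : StageAdj u (u + 1) := by
  simpa using stageAdj_two_pow_mul_succ 0 u

theorem IsStageNeighbor.exists_eq {c : ℕ} (hc : c ≠ 0) :
    ∃ t, ∀ r, IsStageNeighbor c r →
      r = 2 ^ (padicValNat 2 c + 1) * t ∨ r = 2 ^ (padicValNat 2 c + 1) * (t + 1) := by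
  obtain ⟨v, m, ⟨t, rfl⟩, rfl⟩ := Nat.exists_eq_two_pow_mul_odd hc
  refine ⟨t, fun r hr => ?_⟩
  rw [IsStageNeighbor, padicValNat_two_pow_mul_odd v (odd_two_mul_add_one t)] at hr
  rw [padicValNat_two_pow_mul_odd v (odd_two_mul_add_one t), pow_succ]
  rcases hr with hr | hr
  · right
    rw [hr]
    ring
  · left
    have : r + 2 ^ v = 2 ^ v * 2 * t + 2 ^ v := by rw [hr]; ring
    omega

theorem IsStageNeighbor.padicValNat_lt {c r : ℕ} (hc : c ≠ 0) (hr : r ≠ 0)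
    (h : IsStageNeighbor c r) : padicValNat 2 c < padicValNat 2 r := by
  obtain ⟨t, ht⟩ := IsStageNeighbor.exists_eq hc
  have hdvd : 2 ^ (padicValNat 2 c + 1) ∣ r := by
    rcases ht r h with h | h <;> exact h ▸ dvd_mul_right _ _
  exact (padicValNat_dvd_iff_le hr).1 hdvd

theorem IsStageNeighbor.stageAdj {c r r' : ℕ} (hc : c ≠ 0) (h : IsStageNeighbor c r)
    (h' : IsStageNeighbor c r') : StageAdj r r' := by
  obtain ⟨t, ht⟩ := IsStageNeighbor.exists_eq hc
  rcases ht r h with rfl | rfl <;> rcases ht r' h' with rfl | rfl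
  · exact Or.inl rfl
  · exact stageAdj_two_pow_mul_succ _ t
  · exact (stageAdj_two_pow_mul_succ _ t).symm
  · exact Or.inl rfl

theorem not_nestedDissectionLe_of_lt {r c : ℕ} (h : padicValNat 2 c < padicValNat 2 r) :
    ¬ nestedDissectionLe r c := by
  unfold nestedDissectionLe
  omega

theorem StageAdj.isStageNeighbor {r c : ℕ} (hr : r ≠ 0) (hc : c ≠ 0) (h : StageAdj r c)
    (hcr : nestedDissectionLe c r) (hne : c ≠ r) : IsStageNeighbor c r := by
  rcases h with rfl | h | h
  · exact absurd rfl hne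
  · exact h
  · exact absurd hcr (not_nestedDissectionLe_of_lt (h.padicValNat_lt hr hc))

theorem StageAdj.of_nestedDissectionLe {x y z : ℕ} (hx : x ≠ 0) (hy : y ≠ 0) (hz : z ≠ 0)
    (hzx : nestedDissectionLe z x) (hzy : nestedDissectionLe z y)
    (hxz : StageAdj x z) (hyz : StageAdj y z) : StageAdj x y := by
  rcases eq_or_ne z x with rfl | hzx'
  · exact hyz.symm
  rcases eq_or_ne z y with rfl | hzy'
  · exact hxz
  exact (hxz.isStageNeighbor hx hz hzx hzx').stageAdj hz (hyz.isStageNeighbor hy hz hzy hzy')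

def ndKey {N n : ℕ} (p : Fin N × Fin n) : ℕ ×ₗ (Fin N ×ₗ Fin n) :=
  toLex (padicValNat 2 ((p.1 : ℕ) + 1), toLex p)

theorem ndKey_injective {N n : ℕ} : Function.Injective (ndKey (N := N) (n := n)) :=
  fun p q h => by
    simp only [ndKey, EmbeddingLike.apply_eq_iff_eq, Prod.mk.injEq] at h
    exact h.2

theorem ndKey_lt_iff {N n : ℕ} {p q : Fin N × Fin n} :
    ndKey p < ndKey q ↔
      (nestedDissectionLe ((p.1 : ℕ) + 1) ((q.1 : ℕ) + 1) ∧ (p.1 : ℕ) + 1 ≠ (q.1 : ℕ) + 1) ∨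
        (p.1 = q.1 ∧ (p.2 : ℕ) < (q.2 : ℕ)) := by
  simp only [ndKey, Prod.Lex.toLex_lt_toLex, nestedDissectionLe, Fin.lt_def, Fin.ext_iff]
  rcases eq_or_ne (p.1 : ℕ) q.1 with h | h
  · simp [h]
  · omega

theorem nestedDissectionLe_of_ndKey_lt {N n : ℕ} {p q : Fin N × Fin n}
    (h : ndKey p < ndKey q) : nestedDissectionLe ((p.1 : ℕ) + 1) ((q.1 : ℕ) + 1) := by
  rcases ndKey_lt_iff.1 h with h | ⟨h, -⟩
  · exact h.1
  · exact Or.inr ⟨by rw [h], by rw [h]⟩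

theorem stageAdj_of_blockTridiagonal {N n : ℕ} {Ψ : Matrix (Fin N × Fin n) (Fin N × Fin n) ℝ}
    (htri : ∀ (i j : Fin N) (a b : Fin n),
      ((i : ℕ) + 1 < (j : ℕ) ∨ (j : ℕ) + 1 < (i : ℕ)) → Ψ (i, a) (j, b) = 0)
    (p q : Fin N × Fin n) (h : Ψ p q ≠ 0) : StageAdj ((p.1 : ℕ) + 1) ((q.1 : ℕ) + 1) := by
  have : (p.1 : ℕ) = q.1 ∨ (p.1 : ℕ) + 1 = q.1 ∨ (q.1 : ℕ) + 1 = p.1 := by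
    by_contra hfar
    exact h (htri p.1 q.1 p.2 q.2 (by omega))
  rcases this with h | h | h
  · exact Or.inl (by rw [h])
  · rw [← h]
    exact stageAdj_succ _
  · rw [← h]
    exact (stageAdj_succ _).symm

theorem multi_stage_cholesky_fill_in_general (N n : ℕ)
    (Ψ : Matrix (Fin N × Fin n) (Fin N × Fin n) ℝ) (hpd : Ψ.PosDef)
    (htri : ∀ (i j : Fin N) (a b : Fin n),
      ((i : ℕ) + 1 < (j : ℕ) ∨ (j : ℕ) + 1 < (i : ℕ)) → Ψ (i, a) (j, b) = 0) :
    ∃ L : Matrix (Fin N × Fin n) (Fin N × Fin n) ℝ,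
      (∀ (i j : Fin N) (a b : Fin n),
        ((nestedDissectionLe ((i : ℕ) + 1) ((j : ℕ) + 1) ∧ (i : ℕ) + 1 ≠ (j : ℕ) + 1) ∨
            (i = j ∧ (a : ℕ) < (b : ℕ))) →
          L (i, a) (j, b) = 0) ∧
      (∀ (i : Fin N) (a : Fin n), 0 < L (i, a) (i, a)) ∧
      L * Lᵀ = Ψ ∧
      (∀ i j : Fin N,
        (nestedDissectionLe ((j : ℕ) + 1) ((i : ℕ) + 1) ∧ (j : ℕ) + 1 ≠ (i : ℕ) + 1) →
        ¬((i : ℕ) + 1 = ((j : ℕ) + 1) + 2 ^ padicValNat 2 ((j : ℕ) + 1) ∨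
            (i : ℕ) + 1 = ((j : ℕ) + 1) - 2 ^ padicValNat 2 ((j : ℕ) + 1)) →
        ∀ (a b : Fin n), L (i, a) (j, b) = 0) := by
  obtain ⟨L, hlow, hdiag, hLL, hpat⟩ := hpd.exists_sparse_cholesky ndKey_injective
    (fun p q => StageAdj ((p.1 : ℕ) + 1) ((q.1 : ℕ) + 1)) (stageAdj_of_blockTridiagonal htri)
    (fun _ _ _ hzx hzy hxz hyz => hxz.of_nestedDissectionLe (by omega) (by omega) (by omega)
      (nestedDissectionLe_of_ndKey_lt hzx) (nestedDissectionLe_of_ndKey_lt hzy) hyz)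
  refine ⟨L, fun i j a b h => hlow _ _ (ndKey_lt_iff.2 h), fun i a => hdiag _, hLL,
    fun i j hji hfar a b => hpat _ _ fun hadj => hfar ?_⟩
  have h := hadj.isStageNeighbor (by omega) (by omega) hji.1 hji.2
  simp only [IsStageNeighbor] at h
  omega

/-- In the multi-stage permuted Cholesky factorization of a block tridiagonal symmetric
positive definite matrix, each column at stage `s = 2^{ν₂(c)}` has nonzero off-diagonal
blocks only in the rows of its two neighbours `c − s` and `c + s`: there exists `L`,
lower triangular with respect to the nested-dissection ordering of the block labels
`i + 1`, with strictly positive diagonal and `L * Lᵀ = Ψ`, such that for block labels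
`r ≠ c` with `c` strictly preceding `r`, the block `L(r, c)` vanishes unless
`r = c + 2^{ν₂(c)}` or `r = c − 2^{ν₂(c)}`. -/
theorem multi_stage_cholesky_fill_in (N n : ℕ) (hN : 0 < N) (hn : 0 < n)
    (Ψ : Matrix (Fin N × Fin n) (Fin N × Fin n) ℝ) (hsym : Ψ.IsSymm) (hpd : Ψ.PosDef)
    (htri : ∀ (i j : Fin N) (a b : Fin n),
      ((i : ℕ) + 1 < (j : ℕ) ∨ (j : ℕ) + 1 < (i : ℕ)) → Ψ (i, a) (j, b) = 0) :
    ∃ L : Matrix (Fin N × Fin n) (Fin N × Fin n) ℝ,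
      (∀ (i j : Fin N) (a b : Fin n),
        ((nestedDissectionLe ((i : ℕ) + 1) ((j : ℕ) + 1) ∧ (i : ℕ) + 1 ≠ (j : ℕ) + 1) ∨
            (i = j ∧ (a : ℕ) < (b : ℕ))) →
          L (i, a) (j, b) = 0) ∧
      (∀ (i : Fin N) (a : Fin n), 0 < L (i, a) (i, a)) ∧
      L * Lᵀ = Ψ ∧
      (∀ i j : Fin N,
        (nestedDissectionLe ((j : ℕ) + 1) ((i : ℕ) + 1) ∧ (j : ℕ) + 1 ≠ (i : ℕ) + 1) →
        ¬((i : ℕ) + 1 = ((j : ℕ) + 1) + 2 ^ padicValNat 2 ((j : ℕ) + 1) ∨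
            (i : ℕ) + 1 = ((j : ℕ) + 1) - 2 ^ padicValNat 2 ((j : ℕ) + 1)) →
        ∀ (a b : Fin n), L (i, a) (j, b) = 0) :=
  multi_stage_cholesky_fill_in_general N n Ψ hpd htri
end
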